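/- arXiv:1701.04582 — 2 statements merged into one kernel-verified Lean document; each statement's English description precedes it below -/
import Mathlib

section
/- Let q ∈ [0,1] and let C be a bivariate copula. Define ρ[C] := 12∫_{[0,1]²} C(u,v) d(u,v) − 3 (Spearman's rho, integral with respect to Lebesgue measure) and γ[C] := 8·((1/2)∫₀¹ C(t,t) dt + (1/2)∫₀¹ C(t,1−t) dt) − 2 (Gini's gamma). Let ν_q := (1−q)·λ² + q·((1/2)μ_M + (1/2)μ_W) be the probability measure associated with the copula E_q := (1−q)Π + qM_{Γ^ν}, where λ² is Lebesgue measure on [0,1]² and μ_M, μ_W are the pushforwards of the uniform measure on [0,1] under t ↦ (t,t) and t ↦ (t,1−t). Then the measure of concordance κ_{E_q}[C] := (∫_{[0,1]²} C dν_q − 1/4)/(∫_{[0,1]²} min(u,v) dν_q(u,v) − 1/4) satisfies κ_{E_q}[C] = (2(1−q)/(2+q))·ρ[C] + (3q/(2+q))·γ[C]. -/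
open MeasureTheory Set

/-- A bivariate copula on [0,1]², encoded as a function `ℝ → ℝ → ℝ` whose
defining properties are required on the unit square. -/
def IsCopula (C : ℝ → ℝ → ℝ) : Prop :=
  (∀ u ∈ Icc (0:ℝ) 1, C u 0 = 0) ∧
  (∀ v ∈ Icc (0:ℝ) 1, C 0 v = 0) ∧
  (∀ u ∈ Icc (0:ℝ) 1, C u 1 = u) ∧
  (∀ v ∈ Icc (0:ℝ) 1, C 1 v = v) ∧
  (∀ u₁ u₂ v₁ v₂ : ℝ, u₁ ∈ Icc (0:ℝ) 1 → u₂ ∈ Icc (0:ℝ) 1 → v₁ ∈ Icc (0:ℝ) 1 →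
    v₂ ∈ Icc (0:ℝ) 1 → u₁ ≤ u₂ → v₁ ≤ v₂ →
    0 ≤ C u₂ v₂ - C u₂ v₁ - C u₁ v₂ + C u₁ v₁) ∧
  (∀ u ∈ Icc (0:ℝ) 1, ∀ v ∈ Icc (0:ℝ) 1, C u v ∈ Icc (0:ℝ) 1)

/-- Γ-invariance of a bivariate copula: invariance under the transposition and
the partial reflection ν₁. -/
def IsGammaInvariant (C : ℝ → ℝ → ℝ) : Prop :=
  ∀ u ∈ Icc (0:ℝ) 1, ∀ v ∈ Icc (0:ℝ) 1,
    C u v = C v u ∧ C u v = v - C (1 - u) v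

/-- The unit square in ℝ². -/
def unitSquare : Set (ℝ × ℝ) := Icc (0:ℝ) 1 ×ˢ Icc (0:ℝ) 1

/-- `μ` is a measure on [0,1]² whose distribution function is `A`. -/
def IsDistributionOf (μ : Measure (ℝ × ℝ)) (A : ℝ → ℝ → ℝ) : Prop :=
  ∀ u ∈ Icc (0:ℝ) 1, ∀ v ∈ Icc (0:ℝ) 1,
    μ (Icc (0:ℝ) u ×ˢ Icc (0:ℝ) v) = ENNReal.ofReal (A u v)

/-- The biconvex form `[C, A]` where `μ` is the measure associated with `A`. -/
noncomputable def biForm (μ : Measure (ℝ × ℝ)) (C : ℝ → ℝ → ℝ) : ℝ :=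
  ∫ p in unitSquare, C p.1 p.2 ∂μ

/-!
The measure `νq` is a mixture of Lebesgue measure on the unit square and the uniform distributions
on its two diagonals, and the biconvex form is linear in the measure, so
`[C, E_q] = (1 - q) ∫ C + q (½ ∫ C(t, t) dt + ½ ∫ C(t, 1 - t) dt)`. All these integrals exist
because a copula is 1-Lipschitz in each variable, hence continuous on `[0,1]²`. For `C = M` the
three integrals are `1/3`, `1/2` and `1/4`, so `[M, E_q] - 1/4 = (2 + q) / 24`, and dividing gives
the stated combination of Spearman's rho and Gini's gamma.
-/

namespace IsCopula

variable {C : ℝ → ℝ → ℝ}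

lemma swap (hC : IsCopula C) : IsCopula fun u v => C v u := by
  obtain ⟨h0l, h0r, h1l, h1r, hinc, hmem⟩ := hC
  refine ⟨h0r, h0l, h1r, h1l, fun u₁ u₂ v₁ v₂ hu₁ hu₂ hv₁ hv₂ hu hv => ?_,
    fun u hu v hv => hmem v hv u hu⟩
  linarith [hinc v₁ v₂ u₁ u₂ hv₁ hv₂ hu₁ hu₂ hv hu]

lemma sub_mem_Icc_left (hC : IsCopula C) {u₁ u₂ v : ℝ} (hu₁ : u₁ ∈ Icc (0:ℝ) 1)
    (hu₂ : u₂ ∈ Icc (0:ℝ) 1) (hv : v ∈ Icc (0:ℝ) 1) (h : u₁ ≤ u₂) :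
    C u₂ v - C u₁ v ∈ Icc 0 (u₂ - u₁) := by
  obtain ⟨h0, -, h1, -, hinc, -⟩ := hC
  have hlow := hinc u₁ u₂ 0 v hu₁ hu₂ (left_mem_Icc.2 zero_le_one) hv h hv.1
  have hupp := hinc u₁ u₂ v 1 hu₁ hu₂ hv (right_mem_Icc.2 zero_le_one) h hv.2
  rw [h0 u₁ hu₁, h0 u₂ hu₂] at hlow
  rw [h1 u₁ hu₁, h1 u₂ hu₂] at hupp
  constructor <;> linarith

lemma abs_sub_le_left (hC : IsCopula C) {u₁ u₂ v : ℝ} (hu₁ : u₁ ∈ Icc (0:ℝ) 1)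
    (hu₂ : u₂ ∈ Icc (0:ℝ) 1) (hv : v ∈ Icc (0:ℝ) 1) :
    |C u₂ v - C u₁ v| ≤ |u₂ - u₁| := by
  wlog h : u₁ ≤ u₂ generalizing u₁ u₂
  · rw [abs_sub_comm, abs_sub_comm u₂]
    exact this hu₂ hu₁ (le_of_not_ge h)
  obtain ⟨hlow, hupp⟩ := hC.sub_mem_Icc_left hu₁ hu₂ hv h
  rwa [abs_of_nonneg hlow, abs_of_nonneg (sub_nonneg.2 h)]

lemma abs_sub_le_right (hC : IsCopula C) {u v₁ v₂ : ℝ} (hu : u ∈ Icc (0:ℝ) 1)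
    (hv₁ : v₁ ∈ Icc (0:ℝ) 1) (hv₂ : v₂ ∈ Icc (0:ℝ) 1) :
    |C u v₂ - C u v₁| ≤ |v₂ - v₁| :=
  hC.swap.abs_sub_le_left hv₁ hv₂ hu

lemma lipschitzOnWith (hC : IsCopula C) :
    LipschitzOnWith 2 (fun p : ℝ × ℝ => C p.1 p.2) unitSquare := by
  refine LipschitzOnWith.of_dist_le_mul fun x hx y hy => ?_
  have h₁ : dist x.1 y.1 ≤ dist x y := by rw [Prod.dist_eq]; exact le_max_left _ _
  have h₂ : dist x.2 y.2 ≤ dist x y := by rw [Prod.dist_eq]; exact le_max_right _ _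
  have hsplit : dist (C x.1 x.2) (C y.1 y.2) ≤ dist x.1 y.1 + dist x.2 y.2 := by
    simp only [Real.dist_eq]
    calc |C x.1 x.2 - C y.1 y.2|
        ≤ |C x.1 x.2 - C y.1 x.2| + |C y.1 x.2 - C y.1 y.2| := abs_sub_le _ _ _
      _ ≤ |x.1 - y.1| + |x.2 - y.2| :=
        add_le_add (hC.abs_sub_le_left hy.1 hx.1 hx.2) (hC.abs_sub_le_right hy.1 hy.2 hx.2)
  push_cast
  linarith

lemma continuousOn (hC : IsCopula C) :
    ContinuousOn (fun p : ℝ × ℝ => C p.1 p.2) unitSquare :=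
  hC.lipschitzOnWith.continuousOn

end IsCopula

lemma measurableSet_unitSquare : MeasurableSet unitSquare :=
  measurableSet_Icc.prod measurableSet_Icc

lemma isCompact_unitSquare : IsCompact unitSquare :=
  isCompact_Icc.prod isCompact_Icc

section BiForm

variable {C : ℝ → ℝ → ℝ}

lemma biForm_add {μ ν : Measure (ℝ × ℝ)}
    (hμ : IntegrableOn (fun p : ℝ × ℝ => C p.1 p.2) unitSquare μ)
    (hν : IntegrableOn (fun p : ℝ × ℝ => C p.1 p.2) unitSquare ν) :
    biForm (μ + ν) C = biForm μ C + biForm ν C := by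
  rw [biForm, Measure.restrict_add]
  exact integral_add_measure hμ hν

lemma biForm_smul (c : ENNReal) (μ : Measure (ℝ × ℝ)) :
    biForm (c • μ) C = c.toReal * biForm μ C := by
  rw [biForm, Measure.restrict_smul, integral_smul_measure, smul_eq_mul, biForm]

lemma biForm_volume_restrict :
    biForm (volume.restrict unitSquare) C = ∫ p in unitSquare, C p.1 p.2 := by
  rw [biForm, Measure.restrict_restrict measurableSet_unitSquare, inter_self]

lemma biForm_map_restrict {α : Type*} [MeasurableSpace α] {μ : Measure α} {s : Set α}
    {g : α → ℝ × ℝ} (hs : MeasurableSet s) (hg : Measurable g) (hgs : MapsTo g s unitSquare)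
    (hC : ContinuousOn (fun p : ℝ × ℝ => C p.1 p.2) unitSquare) :
    biForm ((μ.restrict s).map g) C = ∫ x in s, C (g x).1 (g x).2 ∂μ := by
  have hconc : ((μ.restrict s).map g).restrict unitSquare = (μ.restrict s).map g :=
    Measure.restrict_eq_self_of_ae_mem <|
      (ae_map_iff hg.aemeasurable measurableSet_unitSquare).2 (ae_restrict_of_forall_mem hs hgs)
  have hmeas := hC.aestronglyMeasurable (μ := (μ.restrict s).map g) measurableSet_unitSquare
  rw [hconc] at hmeas
  rw [biForm, hconc, integral_map hg.aemeasurable hmeas]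

end BiForm

lemma biForm_mixture {C : ℝ → ℝ → ℝ} {q : ℝ} (hq : q ∈ Icc (0:ℝ) 1)
    (hC : ContinuousOn (fun p : ℝ × ℝ => C p.1 p.2) unitSquare) :
    biForm (ENNReal.ofReal (1 - q) • volume.restrict unitSquare
      + ENNReal.ofReal q •
        ((1/2 : ENNReal) • Measure.map (fun t : ℝ => (t, t)) (volume.restrict (Icc (0:ℝ) 1))
        + (1/2 : ENNReal) • Measure.map (fun t : ℝ => (t, 1 - t)) (volume.restrict (Icc (0:ℝ) 1))))
      C
    = (1 - q) * (∫ p in unitSquare, C p.1 p.2)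
      + q * (1/2 * (∫ t in Icc (0:ℝ) 1, C t t) + 1/2 * (∫ t in Icc (0:ℝ) 1, C t (1 - t))) := by
  have hintegrable (μ : Measure (ℝ × ℝ)) [IsFiniteMeasureOnCompacts μ] :
      IntegrableOn (fun p : ℝ × ℝ => C p.1 p.2) unitSquare μ :=
    hC.integrableOn_compact isCompact_unitSquare
  have hsmul {μ : Measure (ℝ × ℝ)} (c : ENNReal) (hc : c ≠ ⊤)
      (h : IntegrableOn (fun p : ℝ × ℝ => C p.1 p.2) unitSquare μ) :
      IntegrableOn (fun p : ℝ × ℝ => C p.1 p.2) unitSquare (c • μ) := by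
    rw [IntegrableOn, Measure.restrict_smul]
    exact h.smul_measure hc
  have hdiag : MapsTo (fun t : ℝ => (t, t)) (Icc 0 1) unitSquare := fun t ht => ⟨ht, ht⟩
  have hanti : MapsTo (fun t : ℝ => (t, 1 - t)) (Icc 0 1) unitSquare := fun t ht =>
    ⟨ht, by constructor <;> linarith [ht.1, ht.2]⟩
  have hhalf : (1/2 : ENNReal) ≠ ⊤ := by simp
  have hM := hintegrable (Measure.map (fun t : ℝ => (t, t)) (volume.restrict (Icc (0:ℝ) 1)))
  have hW := hintegrable (Measure.map (fun t : ℝ => (t, 1 - t)) (volume.restrict (Icc (0:ℝ) 1)))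
  have hdiags := (hsmul _ hhalf hM).add_measure (hsmul _ hhalf hW)
  rw [biForm_add (hsmul _ ENNReal.ofReal_ne_top (hintegrable _))
      (hsmul _ ENNReal.ofReal_ne_top hdiags), biForm_smul, biForm_smul,
    biForm_add (hsmul _ hhalf hM) (hsmul _ hhalf hW), biForm_smul, biForm_smul,
    biForm_volume_restrict,
    biForm_map_restrict measurableSet_Icc (by fun_prop) hdiag hC,
    biForm_map_restrict measurableSet_Icc (by fun_prop) hanti hC,
    ENNReal.toReal_ofReal (sub_nonneg.2 hq.2), ENNReal.toReal_ofReal hq.1]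
  norm_num

lemma integral_Icc_min_left {x : ℝ} (hx : x ∈ Icc (0:ℝ) 1) :
    ∫ y in Icc (0:ℝ) 1, min x y = x - x ^ 2 / 2 := by
  have hcont : Continuous fun y => min x y := by fun_prop
  rw [integral_Icc_eq_integral_Ioc, ← intervalIntegral.integral_of_le zero_le_one,
    ← intervalIntegral.integral_add_adjacent_intervals (b := x)
      (hcont.intervalIntegrable _ _) (hcont.intervalIntegrable _ _)]
  have hleft : ∫ y in (0:ℝ)..x, min x y = ∫ y in (0:ℝ)..x, y :=
    intervalIntegral.integral_congr fun y hy => by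
      rw [uIcc_of_le hx.1] at hy; exact min_eq_right hy.2
  have hright : ∫ y in x..(1:ℝ), min x y = ∫ y in x..(1:ℝ), x :=
    intervalIntegral.integral_congr fun y hy => by
      rw [uIcc_of_le hx.2] at hy; exact min_eq_left hy.1
  rw [hleft, hright, integral_id, intervalIntegral.integral_const, smul_eq_mul]
  ring

lemma integral_unitSquare_min : ∫ p in unitSquare, min p.1 p.2 = 1/3 := by
  rw [unitSquare, Measure.volume_eq_prod, setIntegral_prod _
      (continuous_min.continuousOn.integrableOn_compact isCompact_unitSquare),
    setIntegral_congr_fun measurableSet_Icc fun x hx => integral_Icc_min_left hx,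
    integral_Icc_eq_integral_Ioc, ← intervalIntegral.integral_of_le zero_le_one,
    intervalIntegral.integral_sub intervalIntegral.intervalIntegrable_id
      ((by fun_prop : Continuous fun x : ℝ => x ^ 2 / 2).intervalIntegrable _ _),
    intervalIntegral.integral_div, integral_id, integral_pow]
  norm_num

lemma integral_Icc_min_self : ∫ t in Icc (0:ℝ) 1, min t t = 1/2 := by
  simp only [min_self]
  rw [integral_Icc_eq_integral_Ioc, ← intervalIntegral.integral_of_le zero_le_one, integral_id]
  norm_num

lemma integral_Icc_min_one_sub : ∫ t in Icc (0:ℝ) 1, min t (1 - t) = 1/4 := by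
  have hcont : Continuous fun t : ℝ => min t (1 - t) := by fun_prop
  rw [integral_Icc_eq_integral_Ioc, ← intervalIntegral.integral_of_le zero_le_one,
    ← intervalIntegral.integral_add_adjacent_intervals (b := 1/2)
      (hcont.intervalIntegrable _ _) (hcont.intervalIntegrable _ _)]
  have hleft : ∫ t in (0:ℝ)..(1/2), min t (1 - t) = ∫ t in (0:ℝ)..(1/2), t :=
    intervalIntegral.integral_congr fun t ht => by
      rw [uIcc_of_le (by norm_num)] at ht; exact min_eq_left (by linarith [ht.2])
  have hright : ∫ t in (1/2:ℝ)..1, min t (1 - t) = ∫ t in (1/2:ℝ)..1, (1 - t) :=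
    intervalIntegral.integral_congr fun t ht => by
      rw [uIcc_of_le (by norm_num)] at ht; exact min_eq_right (by linarith [ht.1])
  rw [hleft, hright, integral_id, intervalIntegral.integral_sub intervalIntegrable_const
      intervalIntegral.intervalIntegrable_id, integral_one, integral_id]
  norm_num

theorem stmt10 (q : ℝ) (hq : q ∈ Icc (0:ℝ) 1) (C : ℝ → ℝ → ℝ) (hC : IsCopula C)
    (μM μW νq : MeasureTheory.Measure (ℝ × ℝ))
    (hμM : μM = MeasureTheory.Measure.map (fun t : ℝ => (t, t))
      (MeasureTheory.volume.restrict (Icc (0:ℝ) 1)))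
    (hμW : μW = MeasureTheory.Measure.map (fun t : ℝ => (t, 1 - t))
      (MeasureTheory.volume.restrict (Icc (0:ℝ) 1)))
    (hνq : νq = ENNReal.ofReal (1 - q) • MeasureTheory.volume.restrict unitSquare
      + ENNReal.ofReal q • ((1/2 : ENNReal) • μM + (1/2 : ENNReal) • μW)) :
    (biForm νq C - 1/4) / (biForm νq (fun u v => min u v) - 1/4)
      = (2 * (1 - q) / (2 + q)) * (12 * (∫ p in unitSquare, C p.1 p.2) - 3)
      + (3 * q / (2 + q)) * (8 * ((1/2) * (∫ t in Icc (0:ℝ) 1, C t t)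
          + (1/2) * (∫ t in Icc (0:ℝ) 1, C t (1 - t))) - 2) := by
  subst hνq hμM hμW
  rw [biForm_mixture hq hC.continuousOn, biForm_mixture hq continuous_min.continuousOn,
    integral_unitSquare_min, integral_Icc_min_self, integral_Icc_min_one_sub]
  have hden : (1 - q) * (1/3) + q * (1/2 * (1/2) + 1/2 * (1/4)) - 1/4 = (2 + q) / 24 := by ring
  have hq2 : (2 : ℝ) + q ≠ 0 := by linarith [hq.1]
  rw [hden]
  field_simp
  ring
end

section
/- Let n ≥ 1, let A be a bivariate copula, and let μ be a probability measure on [0,1]² whose distribution function is A, i.e. μ([0,u]×[0,v]) = A(u,v) for all u,v ∈ [0,1]. Let σ and τ be permutations of {1,…,n} and set u_k := (σ(k)/(n+1), τ(k)/(n+1)) for k = 1,…,n. Define the empirical copula Ĉ_n : [0,1]² → [0,1] by Ĉ_n(u,v) := (1/n)·#{k ∈ {1,…,n} : σ(k)/(n+1) ≤ u and τ(k)/(n+1) ≤ v}. Then ∫_{[0,1]²} Ĉ_n dμ = (1/n)·Σ_{k=1}^n A(σ(k)/(n+1), τ(k)/(n+1)). -/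
open MeasureTheory Set

/-!
Integrating the empirical copula against `μ` reduces, by linearity, to the `μ`-masses of the
closed corner rectangles `[a, 1] × [b, 1]` at the rank points. Since the marginals of a copula
are uniform, lines parallel to the axes are `μ`-null, so each such mass is the `A`-volume
`1 - a - b + A(a, b)` of the rectangle. Each coordinate of the rank points runs through
`1/(n+1), …, n/(n+1)`, whose sum is `n/2`, so the affine terms cancel in the average.
-/

namespace IsCopula

variable {A : ℝ → ℝ → ℝ}

theorem apply_one_right (hA : IsCopula A) {u : ℝ} (hu : u ∈ Icc (0 : ℝ) 1) : A u 1 = u :=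
  hA.2.2.1 u hu

theorem apply_one_left (hA : IsCopula A) {v : ℝ} (hv : v ∈ Icc (0 : ℝ) 1) : A 1 v = v :=
  hA.2.2.2.1 v hv

theorem nonneg (hA : IsCopula A) {u v : ℝ} (hu : u ∈ Icc (0 : ℝ) 1) (hv : v ∈ Icc (0 : ℝ) 1) :
    0 ≤ A u v :=
  (hA.2.2.2.2.2 u hu v hv).1

end IsCopula

theorem measureReal_sdiff_prod_sdiff {α β : Type*} [MeasurableSpace α] [MeasurableSpace β]
    {μ : Measure (α × β)} {s₁ s₂ : Set α} {t₁ t₂ : Set β} (hs : s₁ ⊆ s₂) (ht : t₁ ⊆ t₂)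
    (hs₁ : MeasurableSet s₁) (hs₂ : MeasurableSet s₂) (ht₁ : MeasurableSet t₁)
    (ht₂ : MeasurableSet t₂) (hfin : μ (s₂ ×ˢ t₂) ≠ ⊤) :
    μ.real ((s₂ \ s₁) ×ˢ (t₂ \ t₁)) =
      μ.real (s₂ ×ˢ t₂) - μ.real (s₂ ×ˢ t₁) - μ.real (s₁ ×ˢ t₂) + μ.real (s₁ ×ˢ t₁) := by
  have strip : ∀ s ⊆ s₂, MeasurableSet s →
      μ.real (s ×ˢ (t₂ \ t₁)) = μ.real (s ×ˢ t₂) - μ.real (s ×ˢ t₁) := by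
    intro s hs hsm
    rw [← measureReal_sdiff (prod_mono_right ht) (hsm.prod ht₁)
      (measure_ne_top_of_subset (prod_mono_left hs) hfin)]
    congr 1
    ext
    simp only [mem_prod, mem_sdiff]
    tauto
  have hsplit : (s₂ \ s₁) ×ˢ (t₂ \ t₁) = s₂ ×ˢ (t₂ \ t₁) \ s₁ ×ˢ (t₂ \ t₁) := by
    ext
    simp only [mem_prod, mem_sdiff]
    tauto
  rw [hsplit, measureReal_sdiff (prod_mono_left hs) (hs₁.prod (ht₂.diff ht₁))
    (measure_ne_top_of_subset (prod_mono_right sdiff_subset) hfin),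
    strip s₂ subset_rfl hs₂, strip s₁ hs hs₁]
  ring

theorem measure_singleton_prod_eq_zero {β : Type*} [MeasurableSpace β] {μ : Measure (ℝ × β)}
    {t : Set β} (ht : MeasurableSet t) (hfin : μ (Icc 0 1 ×ˢ t) ≠ ⊤)
    (hunif : ∀ x ∈ Icc (0 : ℝ) 1, μ.real (Icc 0 x ×ˢ t) = x) {a : ℝ} (ha : a ∈ Ioc 0 1) :
    μ ({a} ×ˢ t) = 0 := by
  have hfin' : ∀ x ≤ 1, μ (Icc 0 x ×ˢ t) ≠ ⊤ := fun x hx =>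
    measure_ne_top_of_subset (prod_mono_left (Icc_subset_Icc le_rfl hx)) hfin
  rw [← measureReal_eq_zero_iff (measure_ne_top_of_subset
    (prod_mono_left (singleton_subset_iff.2 (Ioc_subset_Icc_self ha))) hfin)]
  refine le_antisymm (le_of_forall_pos_le_add fun ε hε => ?_) measureReal_nonneg
  set a' := a - min ε a
  have ha' : a' ∈ Icc (0 : ℝ) 1 := by
    constructor <;> simp only [a'] <;> linarith [min_le_right ε a, lt_min hε ha.1, ha.2]
  have ha'a : a' < a := by simp only [a']; linarith [lt_min hε ha.1]
  have hline : {a} ×ˢ t ⊆ Icc 0 a ×ˢ t \ Icc 0 a' ×ˢ t := by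
    rintro ⟨x, y⟩ ⟨rfl, hy⟩
    exact ⟨⟨⟨ha.1.le, le_rfl⟩, hy⟩, fun h => by linarith [h.1.2]⟩
  calc μ.real ({a} ×ˢ t) ≤ μ.real (Icc 0 a ×ˢ t \ Icc 0 a' ×ˢ t) :=
        measureReal_mono hline (measure_ne_top_of_subset sdiff_subset (hfin' a ha.2))
    _ = a - a' := by
        rw [measureReal_sdiff (prod_mono_left (Icc_subset_Icc le_rfl ha'a.le))
          (measurableSet_Icc.prod ht) (hfin' a ha.2), hunif a ⟨ha.1.le, ha.2⟩, hunif a' ha']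
    _ ≤ 0 + ε := by simp only [a']; linarith [min_le_left ε a]

namespace IsDistributionOf

variable {μ : Measure (ℝ × ℝ)} {A : ℝ → ℝ → ℝ}

theorem measure_unitSquare_ne_top (hdist : IsDistributionOf μ A) : μ unitSquare ≠ ⊤ := by
  rw [unitSquare, hdist 1 (right_mem_Icc.2 zero_le_one) 1 (right_mem_Icc.2 zero_le_one)]
  exact ENNReal.ofReal_ne_top

theorem measureReal_Icc_prod_Icc (hA : IsCopula A) (hdist : IsDistributionOf μ A) {u v : ℝ}
    (hu : u ∈ Icc (0 : ℝ) 1) (hv : v ∈ Icc (0 : ℝ) 1) :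
    μ.real (Icc 0 u ×ˢ Icc 0 v) = A u v := by
  rw [measureReal_def, hdist u hu v hv, ENNReal.toReal_ofReal (hA.nonneg hu hv)]

theorem measure_singleton_prod_Icc_eq_zero (hA : IsCopula A) (hdist : IsDistributionOf μ A)
    {a : ℝ} (ha : a ∈ Ioc 0 1) : μ ({a} ×ˢ Icc 0 1) = 0 :=
  _root_.measure_singleton_prod_eq_zero measurableSet_Icc hdist.measure_unitSquare_ne_top
    (fun x hx => by
      rw [hdist.measureReal_Icc_prod_Icc hA hx (right_mem_Icc.2 zero_le_one),
        hA.apply_one_right hx]) ha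

theorem measure_Icc_prod_singleton_eq_zero (hA : IsCopula A) (hdist : IsDistributionOf μ A)
    {b : ℝ} (hb : b ∈ Ioc 0 1) : μ (Icc 0 1 ×ˢ {b}) = 0 := by
  have hswap : ∀ {s t : Set ℝ}, MeasurableSet s → MeasurableSet t →
      μ.map Prod.swap (s ×ˢ t) = μ (t ×ˢ s) := fun hs ht => by
    rw [Measure.map_apply measurable_swap (hs.prod ht), preimage_swap_prod]
  rw [← hswap (measurableSet_singleton b) measurableSet_Icc]
  refine _root_.measure_singleton_prod_eq_zero measurableSet_Icc ?_ (fun y hy => ?_) hb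
  · rw [hswap measurableSet_Icc measurableSet_Icc]
    exact hdist.measure_unitSquare_ne_top
  · rw [measureReal_def, hswap measurableSet_Icc measurableSet_Icc, ← measureReal_def,
      hdist.measureReal_Icc_prod_Icc hA (right_mem_Icc.2 zero_le_one) hy, hA.apply_one_left hy]

theorem measureReal_Ioc_prod_Ioc_one (hA : IsCopula A) (hdist : IsDistributionOf μ A)
    {a b : ℝ} (ha : a ∈ Icc (0 : ℝ) 1) (hb : b ∈ Icc (0 : ℝ) 1) :
    μ.real (Ioc a 1 ×ˢ Ioc b 1) = 1 - a - b + A a b := by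
  have hunit : (1 : ℝ) ∈ Icc 0 1 := right_mem_Icc.2 zero_le_one
  have hIoc : ∀ {c : ℝ}, 0 ≤ c → Ioc c 1 = Icc 0 1 \ Icc 0 c := fun hc => by
    ext x
    simp only [mem_Ioc, mem_sdiff, mem_Icc]
    grind
  rw [hIoc ha.1, hIoc hb.1,
    measureReal_sdiff_prod_sdiff (Icc_subset_Icc le_rfl ha.2) (Icc_subset_Icc le_rfl hb.2)
      measurableSet_Icc measurableSet_Icc measurableSet_Icc measurableSet_Icc
      hdist.measure_unitSquare_ne_top,
    hdist.measureReal_Icc_prod_Icc hA hunit hunit, hdist.measureReal_Icc_prod_Icc hA hunit hb,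
    hdist.measureReal_Icc_prod_Icc hA ha hunit, hdist.measureReal_Icc_prod_Icc hA ha hb,
    hA.apply_one_right hunit, hA.apply_one_right ha, hA.apply_one_left hb]
  ring

theorem measureReal_Icc_prod_Icc_one (hA : IsCopula A) (hdist : IsDistributionOf μ A)
    {a b : ℝ} (ha : a ∈ Ioc 0 1) (hb : b ∈ Ioc 0 1) :
    μ.real (Icc a 1 ×ˢ Icc b 1) = 1 - a - b + A a b := by
  have hlines : Icc a 1 ×ˢ Icc b 1 \ Ioc a 1 ×ˢ Ioc b 1 ⊆ {a} ×ˢ Icc 0 1 ∪ Icc 0 1 ×ˢ {b} := by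
    rintro ⟨x, y⟩ ⟨⟨⟨hax, hx1⟩, hby, hy1⟩, hnot⟩
    rcases hax.eq_or_lt with rfl | hax'
    · exact Or.inl ⟨rfl, hb.1.le.trans hby, hy1⟩
    · rcases hby.eq_or_lt with rfl | hby'
      · exact Or.inr ⟨⟨ha.1.le.trans hax, hx1⟩, rfl⟩
      · exact absurd ⟨⟨hax', hx1⟩, hby', hy1⟩ hnot
  have hnull : μ (Icc a 1 ×ˢ Icc b 1 \ Ioc a 1 ×ˢ Ioc b 1) = 0 :=
    measure_mono_null hlines (measure_union_null
      (hdist.measure_singleton_prod_Icc_eq_zero hA ha)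
      (hdist.measure_Icc_prod_singleton_eq_zero hA hb))
  rw [measureReal_def,
    ← measure_eq_measure_of_null_sdiff (prod_mono Ioc_subset_Icc_self Ioc_subset_Icc_self) hnull]
  exact hdist.measureReal_Ioc_prod_Ioc_one hA (Ioc_subset_Icc_self ha) (Ioc_subset_Icc_self hb)

theorem setIntegral_indicator_Ici_prod_Ici (hA : IsCopula A) (hdist : IsDistributionOf μ A)
    {a b : ℝ} (ha : a ∈ Ioc 0 1) (hb : b ∈ Ioc 0 1) :
    ∫ p in unitSquare, (Ici a ×ˢ Ici b).indicator 1 p ∂μ = 1 - a - b + A a b := by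
  have hIcc : ∀ {c : ℝ}, 0 ≤ c → Ici c ∩ Icc 0 1 = Icc c 1 := fun hc => by
    rw [← Ici_inter_Iic, ← Ici_inter_Iic, ← inter_assoc, Ici_inter_Ici, max_eq_left hc]
  rw [integral_indicator_one (measurableSet_Ici.prod measurableSet_Ici),
    measureReal_restrict_apply (measurableSet_Ici.prod measurableSet_Ici), unitSquare,
    prod_inter_prod, hIcc ha.1.le, hIcc hb.1.le]
  exact hdist.measureReal_Icc_prod_Icc_one hA ha hb

end IsDistributionOf

theorem sum_fin_val_add_one (n : ℕ) : ∑ j : Fin n, (((j : ℕ) : ℝ) + 1) = n * (n + 1) / 2 := by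
  induction n with
  | zero => simp
  | succ m ih =>
    rw [Fin.sum_univ_castSucc]
    simp only [Fin.val_castSucc, Fin.val_last, ih]
    push_cast
    ring

theorem sum_perm_val_add_one_div (n : ℕ) (σ : Equiv.Perm (Fin n)) :
    ∑ k, (((σ k : ℕ) : ℝ) + 1) / ((n : ℝ) + 1) = n / 2 := by
  rw [← Finset.sum_div, Equiv.sum_comp σ (fun j : Fin n => ((j : ℕ) : ℝ) + 1),
    sum_fin_val_add_one]
  field_simp

theorem stmt11_general (n : ℕ) (A : ℝ → ℝ → ℝ) (hA : IsCopula A)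
    (μ : MeasureTheory.Measure (ℝ × ℝ))
    (hdist : IsDistributionOf μ A)
    (σ τ : Equiv.Perm (Fin n))
    (Chat : ℝ → ℝ → ℝ)
    (hChat : ∀ u v : ℝ, Chat u v = (1/(n:ℝ)) * ∑ k : Fin n,
      (if (((σ k).val : ℝ) + 1)/((n:ℝ)+1) ≤ u ∧ (((τ k).val : ℝ) + 1)/((n:ℝ)+1) ≤ v
        then (1:ℝ) else 0)) :
    biForm μ Chat = (1/(n:ℝ)) * ∑ k : Fin n,
      A ((((σ k).val : ℝ) + 1)/((n:ℝ)+1)) ((((τ k).val : ℝ) + 1)/((n:ℝ)+1)) := by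
  set r : Equiv.Perm (Fin n) → Fin n → ℝ := fun π k => (((π k : ℕ) : ℝ) + 1) / ((n : ℝ) + 1)
  have hr : ∀ π k, r π k ∈ Ioc (0 : ℝ) 1 := fun π k => by
    have hk : ((π k : ℕ) : ℝ) + 1 ≤ n := by exact_mod_cast (π k).2
    exact ⟨by positivity, (div_le_one (by positivity)).2 (by linarith)⟩
  have : IsFiniteMeasure (μ.restrict unitSquare) :=
    isFiniteMeasure_restrict.2 hdist.measure_unitSquare_ne_top
  have hChat' : ∀ p : ℝ × ℝ,
      Chat p.1 p.2 = (1 / n) * ∑ k, (Ici (r σ k) ×ˢ Ici (r τ k)).indicator 1 p := fun p => by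
    simp only [hChat, indicator_apply, mem_prod, mem_Ici, Pi.one_apply, r]
  calc biForm μ Chat
      = (1 / n) * ∑ k, ∫ p in unitSquare, (Ici (r σ k) ×ˢ Ici (r τ k)).indicator 1 p ∂μ := by
        simp_rw [biForm, hChat', integral_const_mul]
        rw [integral_finsetSum _ fun k _ =>
          (integrable_const 1).indicator (measurableSet_Ici.prod measurableSet_Ici)]
    _ = (1 / n) * ∑ k, (1 - r σ k - r τ k + A (r σ k) (r τ k)) := by
        simp_rw [hdist.setIntegral_indicator_Ici_prod_Ici hA (hr σ _) (hr τ _)]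
    _ = (1 / n) * ∑ k, A (r σ k) (r τ k) := by
        rw [Finset.sum_add_distrib, Finset.sum_sub_distrib, Finset.sum_sub_distrib,
          Finset.sum_const, Finset.card_univ, Fintype.card_fin, nsmul_eq_mul, mul_one,
          sum_perm_val_add_one_div n σ, sum_perm_val_add_one_div n τ]
        ring

theorem stmt11 (n : ℕ) (hn : 1 ≤ n) (A : ℝ → ℝ → ℝ) (hA : IsCopula A)
    (μ : MeasureTheory.Measure (ℝ × ℝ))
    (hμ : MeasureTheory.IsProbabilityMeasure μ) (hdist : IsDistributionOf μ A)
    (σ τ : Equiv.Perm (Fin n))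
    (Chat : ℝ → ℝ → ℝ)
    (hChat : ∀ u v : ℝ, Chat u v = (1/(n:ℝ)) * ∑ k : Fin n,
      (if (((σ k).val : ℝ) + 1)/((n:ℝ)+1) ≤ u ∧ (((τ k).val : ℝ) + 1)/((n:ℝ)+1) ≤ v
        then (1:ℝ) else 0)) :
    biForm μ Chat = (1/(n:ℝ)) * ∑ k : Fin n,
      A ((((σ k).val : ℝ) + 1)/((n:ℝ)+1)) ((((τ k).val : ℝ) + 1)/((n:ℝ)+1)) :=
  stmt11_general n A hA μ hdist σ τ Chat hChat
end
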